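/- Let p be an odd prime, s a positive integer not divisible by p, α an integer, β an integer with gcd(β, s) = 1, and K an integer with 1 ≤ K < p. If Σ_{k=0}^{K} e((k² + αk)/p + βk/s) = 0, then s = 2. -/

import Mathlib

/-!
With `ζ_p = e(1/p)`, `ζ_s = e(1/s)` and `z = ζ_s^β`, a primitive `s`-th root of unity, the sum is
`∑_{k ≤ K} z^k ζ_p^{k² + αk}`. Grouping the terms by `j ≡ k² + αk (mod p)` writes it as
`∑_{j mod p} c_j ζ_p^j` with `c_j ∈ ℚ(ζ_s)`. Since `p ∤ s`, `Φ_p` is still the minimal polynomial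
of `ζ_p` over `ℚ(ζ_s)`, so all `c_j` are equal; since `p` is odd, `x ↦ x² + αx` misses a residue,
so they all vanish. For `k ≤ K < p` the fibre of `k` is `{k, k'}` with `k' ≡ -α - k`, hence
`z^k + z^{k'} = 0`. The partners `c` of `0` and `c - 1` of `1` give `z^c = -1` and
`z^{c-1} = -z`, so `z² = 1`, `z = -1` and `s = 2`.
-/

noncomputable def e (x : ℝ) : ℂ := Complex.exp (2 * Real.pi * Complex.I * x)

open Polynomial IntermediateField Finset Module Complex

theorem e_add (x y : ℝ) : e (x + y) = e x * e y := by
  rw [e, e, e, ← Complex.exp_add]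
  push_cast
  ring_nf

theorem e_intCast_div (a : ℤ) {m : ℕ} (hm : m ≠ 0) :
    e (a / m) = exp (2 * Real.pi * I / m) ^ a := by
  have : (m : ℂ) ≠ 0 := by exact_mod_cast hm
  rw [e, ← exp_int_mul]
  push_cast
  field_simp

theorem IsPrimitiveRoot.zpow_eq_pow_val {M : Type*} [CommGroupWithZero M] {ζ : M} {p : ℕ}
    [NeZero p] (h : IsPrimitiveRoot ζ p) (a : ℤ) : ζ ^ a = ζ ^ (a : ZMod p).val := by
  have ha : a = (a : ZMod p).val + p * (a / p) := by
    rw [ZMod.val_intCast, Int.emod_add_mul_ediv]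
  conv_lhs => rw [ha, zpow_add₀ (h.ne_zero (NeZero.ne p)), zpow_mul, zpow_natCast,
    zpow_natCast, h.pow_eq_one, one_zpow, mul_one]

theorem e_sq_add_mul_div_add_mul_div {p s : ℕ} [NeZero p] (hs : s ≠ 0) (α β : ℤ) (k : ℕ) :
    e ((((k : ℤ) ^ 2 + α * k : ℤ) : ℝ) / p + ((β * k : ℤ) : ℝ) / s) =
      algebraMap ℚ⟮exp (2 * Real.pi * I / s)⟯ ℂ
          ((AdjoinSimple.gen ℚ (exp (2 * Real.pi * I / s)) ^ β) ^ k) *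
        exp (2 * Real.pi * I / p) ^ ((k : ZMod p) ^ 2 + α * k).val := by
  rw [e_add, e_intCast_div _ (NeZero.ne p), e_intCast_div _ hs,
    (isPrimitiveRoot_exp p (NeZero.ne p)).zpow_eq_pow_val, mul_comm, map_pow, map_zpow₀,
    AdjoinSimple.algebraMap_gen, zpow_mul, zpow_natCast]
  push_cast
  rfl

theorem minpoly_adjoin_eq_cyclotomic {L : Type*} [Field L] [CharZero L] {m n : ℕ} [NeZero m]
    [NeZero n] {ζ η : L} (hζ : IsPrimitiveRoot ζ m) (hη : IsPrimitiveRoot η n)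
    (hmn : m.Coprime n) : minpoly ℚ⟮η⟯ ζ = cyclotomic m ℚ⟮η⟯ := by
  have hηint : IsIntegral ℚ η := hη.isIntegral (NeZero.pos n) |>.tower_top
  have hζint : IsIntegral ℚ⟮η⟯ ζ := hζ.isIntegral (NeZero.pos m) |>.tower_top
  have : FiniteDimensional ℚ ℚ⟮η⟯ := adjoin.finiteDimensional hηint
  have : FiniteDimensional ℚ⟮η⟯ ℚ⟮η⟯⟮ζ⟯ := adjoin.finiteDimensional hζint
  have : FiniteDimensional ℚ ℚ⟮η⟯⟮ζ⟯ := FiniteDimensional.trans ℚ ℚ⟮η⟯ ℚ⟮η⟯⟮ζ⟯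
  have hζ' : IsPrimitiveRoot (AdjoinSimple.gen ℚ⟮η⟯ ζ) m :=
    IsPrimitiveRoot.coe_submonoidClass_iff.mp hζ
  have hη' : IsPrimitiveRoot (algebraMap ℚ⟮η⟯ ℚ⟮η⟯⟮ζ⟯ (AdjoinSimple.gen ℚ η)) n :=
    (IsPrimitiveRoot.coe_submonoidClass_iff.mp hη).map_of_injective
      (algebraMap ℚ⟮η⟯ ℚ⟮η⟯⟮ζ⟯).injective
  -- `ℚ(η, ζ)` contains a primitive `mn`-th root of unity, so `[ℚ(η, ζ) : ℚ] ≥ φ(mn) = φ(m) φ(n)`.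
  have hdeg : m.totient * n.totient ≤ (minpoly ℚ⟮η⟯ ζ).natDegree * n.totient :=
    calc m.totient * n.totient = (m.lcm n).totient := by
          rw [hmn.lcm_eq_mul, Nat.totient_mul hmn]
      _ ≤ finrank ℚ ℚ⟮η⟯⟮ζ⟯ := hζ'.lcm_totient_le_finrank hη'
          (cyclotomic.irreducible_rat (Nat.lcm_pos (NeZero.pos m) (NeZero.pos n)))
      _ = finrank ℚ ℚ⟮η⟯ * finrank ℚ⟮η⟯ ℚ⟮η⟯⟮ζ⟯ := (finrank_mul_finrank ℚ ℚ⟮η⟯ ℚ⟮η⟯⟮ζ⟯).symm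
      _ = (minpoly ℚ⟮η⟯ ζ).natDegree * n.totient := by
          rw [adjoin.finrank hηint, adjoin.finrank hζint,
            ← cyclotomic_eq_minpoly_rat hη (NeZero.pos n), natDegree_cyclotomic, mul_comm]
  have hdvd : minpoly ℚ⟮η⟯ ζ ∣ cyclotomic m ℚ⟮η⟯ := by
    apply minpoly.dvd
    rw [aeval_def, ← eval_map, map_cyclotomic]
    exact (hζ.isRoot_cyclotomic (NeZero.pos m)).eq_zero ▸ rfl
  refine (eq_of_monic_of_dvd_of_natDegree_le (minpoly.monic hζint) (cyclotomic.monic m _) hdvd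
    ?_).symm
  rw [natDegree_cyclotomic]
  exact Nat.le_of_mul_le_mul_right hdeg (Nat.totient_pos.mpr (NeZero.pos n))

theorem Polynomial.coeff_cyclotomic_prime_of_lt (R : Type*) [CommRing R] {p : ℕ} [Fact p.Prime]
    {i : ℕ} (hi : i < p) : (cyclotomic p R).coeff i = 1 := by
  simp [cyclotomic_prime, coeff_X_pow, hi]

theorem Polynomial.coeff_eq_coeff_of_cyclotomic_dvd {R : Type*} [CommRing R] [IsDomain R]
    {p : ℕ} [Fact p.Prime] {P : R[X]} (hdvd : cyclotomic p R ∣ P) (hdeg : P.natDegree < p)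
    {i j : ℕ} (hi : i < p) (hj : j < p) : P.coeff i = P.coeff j := by
  obtain ⟨q, rfl⟩ := hdvd
  rcases eq_or_ne q 0 with rfl | hq
  · simp
  have hq0 : q.natDegree = 0 := by
    rw [natDegree_mul (cyclotomic_ne_zero p R) hq, natDegree_cyclotomic,
      Nat.totient_prime Fact.out] at hdeg
    omega
  rw [eq_C_of_natDegree_eq_zero hq0, coeff_mul_C, coeff_mul_C,
    coeff_cyclotomic_prime_of_lt R hi, coeff_cyclotomic_prime_of_lt R hj]

theorem eq_of_sum_mul_pow_eq_zero {F L : Type*} [Field F] [CommRing L] [Algebra F L] {p : ℕ}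
    [Fact p.Prime] {ζ : L} (hζ : minpoly F ζ = cyclotomic p F) {c : ZMod p → F}
    (h : ∑ j, algebraMap F L (c j) * ζ ^ j.val = 0) (i j : ZMod p) : c i = c j := by
  set P : F[X] := ∑ j : ZMod p, C (c j) * X ^ j.val
  have hcoeff (i : ZMod p) : P.coeff i.val = c i := by
    simp only [P, finsetSum_coeff, coeff_C_mul_X_pow, ZMod.val_injective p |>.eq_iff]
    simp
  have hdvd : cyclotomic p F ∣ P := hζ ▸ minpoly.dvd F ζ (by simpa [P] using h)
  have hdeg : P.natDegree < p := by
    have hp := (Fact.out : p.Prime).pos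
    refine lt_of_le_of_lt (natDegree_sum_le_of_forall_le _ _ (n := p - 1) fun j _ =>
      (natDegree_C_mul_X_pow_le _ _).trans (Nat.le_sub_one_of_lt (ZMod.val_lt j))) (by omega)
  rw [← hcoeff i, ← hcoeff j]
  exact coeff_eq_coeff_of_cyclotomic_dvd hdvd hdeg (ZMod.val_lt i) (ZMod.val_lt j)

theorem sum_fiber_eq_zero_of_sum_mul_pow_eq_zero {ι F L : Type*} [Field F] [CommRing L]
    [Algebra F L] {p : ℕ} [Fact p.Prime] {ζ : L} (hζ : minpoly F ζ = cyclotomic p F)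
    {S : Finset ι} {g : ι → ZMod p} {w : ι → F} (hg : ∃ j₀, ∀ k ∈ S, g k ≠ j₀)
    (h : ∑ k ∈ S, algebraMap F L (w k) * ζ ^ (g k).val = 0) (j : ZMod p) :
    ∑ k ∈ S with g k = j, w k = 0 := by
  obtain ⟨j₀, hj₀⟩ := hg
  have hfiber : ∑ i, algebraMap F L (∑ k ∈ S with g k = i, w k) * ζ ^ i.val = 0 := by
    rw [← h, ← sum_fiberwise S g]
    refine sum_congr rfl fun i _ => ?_
    rw [map_sum, sum_mul]
    exact sum_congr rfl fun k hk => by rw [(mem_filter.mp hk).2]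
  rw [eq_of_sum_mul_pow_eq_zero hζ hfiber j j₀, filter_false_of_mem hj₀, sum_empty]

theorem exists_ne_add_eq_zero_of_sum_fiber_eq_zero {ι κ M : Type*} [DecidableEq ι]
    [DecidableEq κ] [AddCommMonoid M] {S : Finset ι} {g : ι → κ} {w : ι → M}
    (hw : ∀ k ∈ S, w k ≠ 0) (hcard : ∀ j, #{k ∈ S | g k = j} ≤ 2)
    (hfib : ∀ j, ∑ k ∈ S with g k = j, w k = 0) {k : ι} (hk : k ∈ S) :
    ∃ k' ∈ S, k' ≠ k ∧ g k' = g k ∧ w k + w k' = 0 := by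
  set F := {i ∈ S | g i = g k}
  have hkF : k ∈ F := mem_filter.mpr ⟨hk, rfl⟩
  have hsum : w k + ∑ i ∈ F.erase k, w i = 0 := by rw [add_sum_erase F w hkF]; exact hfib _
  have hne : (F.erase k).Nonempty := by
    rw [nonempty_iff_ne_empty]
    intro hempty
    rw [hempty, sum_empty, add_zero] at hsum
    exact hw k hk hsum
  have hcardF : #F ≤ 2 := hcard (g k)
  obtain ⟨k', hk'⟩ : ∃ k', F.erase k = {k'} := by
    refine card_eq_one.mp (le_antisymm ?_ (card_pos.mpr hne))
    rw [card_erase_of_mem hkF]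
    omega
  have hk'F : k' ∈ F.erase k := hk' ▸ mem_singleton_self k'
  rw [hk', sum_singleton] at hsum
  obtain ⟨hk'k, hk'F⟩ := mem_erase.mp hk'F
  exact ⟨k', (mem_filter.mp hk'F).1, hk'k, (mem_filter.mp hk'F).2, hsum⟩

theorem eq_or_eq_neg_sub_of_sq_add_mul_eq {R : Type*} [CommRing R] [IsDomain R] {a x y : R}
    (h : x ^ 2 + a * x = y ^ 2 + a * y) : y = x ∨ y = -a - x := by
  have : (y - x) * (y - (-a - x)) = 0 := by linear_combination -h
  rcases mul_eq_zero.mp this with h | h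
  · exact .inl (sub_eq_zero.mp h)
  · exact .inr (sub_eq_zero.mp h)

theorem not_surjective_sq_add_mul {R : Type*} [CommRing R] [Finite R] (h2 : (2 : R) ≠ 0)
    (a : R) : ¬ Function.Surjective fun x : R => x ^ 2 + a * x := by
  intro hsurj
  have hinj := Finite.injective_iff_surjective.mpr hsurj
  have ha : -a = 0 := hinj (by ring)
  have h1 : 1 = -a - 1 := hinj (by ring)
  exact h2 (by linear_combination h1 + ha)

theorem ZMod.natCast_injOn_range (p : ℕ) : Set.InjOn (Nat.cast : ℕ → ZMod p) (range p) := by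
  intro a ha b hb hab
  rw [coe_range, Set.mem_Iio] at ha hb
  rwa [ZMod.natCast_eq_natCast_iff', Nat.mod_eq_of_lt ha, Nat.mod_eq_of_lt hb] at hab

theorem ZMod.natCast_eq_neg_sub_of_sq_add_mul_eq {p : ℕ} [Fact p.Prime] {a : ZMod p}
    {k k' : ℕ} (hk : k < p) (hk' : k' < p) (hne : k' ≠ k)
    (h : (k' : ZMod p) ^ 2 + a * k' = (k : ZMod p) ^ 2 + a * k) : (k' : ZMod p) = -a - k :=
  (eq_or_eq_neg_sub_of_sq_add_mul_eq h.symm).resolve_left fun h' =>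
    hne (natCast_injOn_range p (mem_range.2 hk') (mem_range.2 hk) h')

theorem ZMod.card_filter_sq_add_mul_eq_le_two {p : ℕ} [Fact p.Prime] (a j : ZMod p) {n : ℕ}
    (hn : n ≤ p) : #{k ∈ range n | ((k : ℕ) : ZMod p) ^ 2 + a * k = j} ≤ 2 := by
  set T := {k ∈ range n | ((k : ℕ) : ZMod p) ^ 2 + a * k = j}
  rcases T.eq_empty_or_nonempty with hT | ⟨k₀, hk₀⟩
  · simp [hT]
  calc #T ≤ #({(k₀ : ZMod p), -a - k₀} : Finset (ZMod p)) := by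
        refine card_le_card_of_injOn (Nat.cast : ℕ → ZMod p) (fun k hk => ?_) ?_
        · have := (mem_filter.mp hk₀).2.trans (mem_filter.mp hk).2.symm
          simpa using eq_or_eq_neg_sub_of_sq_add_mul_eq this
        · exact (natCast_injOn_range p).mono fun k hk =>
            range_subset_range.mpr hn (mem_filter.mp hk).1
    _ ≤ 2 := card_le_two

theorem exists_partner_of_sum_mul_pow_sq_add_mul_eq_zero {F L : Type*} [Field F] [CommRing L]
    [Algebra F L] {p : ℕ} [Fact p.Prime] (hp2 : p ≠ 2) {ζ : L}
    (hζ : minpoly F ζ = cyclotomic p F) (a : ZMod p) {n : ℕ} (hn : n ≤ p) {z : F} (hz : z ≠ 0)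
    (h : ∑ k ∈ range n, algebraMap F L (z ^ k) * ζ ^ ((k : ZMod p) ^ 2 + a * k).val = 0)
    (k : ℕ) (hk : k < n) : ∃ k' < n, k' ≠ k ∧ (k' : ZMod p) = -a - k ∧ z ^ k + z ^ k' = 0 := by
  have h2 : (2 : ZMod p) ≠ 0 := Ring.two_ne_zero (by rwa [ZMod.ringChar_zmod_n])
  have hg : ∃ j₀, ∀ k ∈ range n, (k : ZMod p) ^ 2 + a * k ≠ j₀ := by
    obtain ⟨j₀, hj₀⟩ := not_forall.mp (not_surjective_sq_add_mul h2 a)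
    exact ⟨j₀, fun k _ hk => hj₀ ⟨k, hk⟩⟩
  obtain ⟨k', hk', hne, hg', hz'⟩ := exists_ne_add_eq_zero_of_sum_fiber_eq_zero
    (fun k _ => pow_ne_zero k hz) (fun j => ZMod.card_filter_sq_add_mul_eq_le_two a j hn)
    (sum_fiber_eq_zero_of_sum_mul_pow_eq_zero hζ hg h) (mem_range.2 hk)
  rw [mem_range] at hk'
  exact ⟨k', hk', hne, ZMod.natCast_eq_neg_sub_of_sq_add_mul_eq (by omega) (by omega) hne hg', hz'⟩

theorem eq_neg_one_of_pow_succ_eq_neg_one {R : Type*} [CommRing R] [IsDomain R]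
    [NeZero (2 : R)] {z : R} {d : ℕ} (h : z ^ (d + 1) = -1) (hd : z + z ^ d = 0) : z = -1 := by
  have hz2 : z ^ 2 = 1 := by linear_combination (-1) * h + z * hd
  refine (sq_eq_one_iff.mp hz2).resolve_left fun h1 => two_ne_zero (α := R) ?_
  rw [h1, one_pow] at h
  linear_combination h

theorem stmt16 (p : ℕ) (hp : Nat.Prime p) (hodd : Odd p) (s : ℕ) (hs : 0 < s)
    (hps : ¬ p ∣ s) (α β : ℤ) (hβ : Int.gcd β s = 1)
    (K : ℕ) (hK1 : 1 ≤ K) (hKp : K < p)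
    (h : ∑ k ∈ Finset.range (K + 1),
        e ((((k : ℤ) ^ 2 + α * k : ℤ) : ℝ) / p + ((β * k : ℤ) : ℝ) / s) = 0) :
    s = 2 := by
  have : Fact p.Prime := ⟨hp⟩
  have : NeZero s := ⟨hs.ne'⟩
  rw [sum_congr rfl fun k _ => e_sq_add_mul_div_add_mul_div hs.ne' α β k] at h
  set ζs := exp (2 * Real.pi * I / s)
  have hζs : IsPrimitiveRoot ζs s := isPrimitiveRoot_exp s hs.ne'
  set z : ℚ⟮ζs⟯ := AdjoinSimple.gen ℚ ζs ^ β
  have hz : IsPrimitiveRoot z s :=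
    (IsPrimitiveRoot.coe_submonoidClass_iff.mp hζs).zpow_of_gcd_eq_one β hβ
  have hpartner := exists_partner_of_sum_mul_pow_sq_add_mul_eq_zero
    (by rintro rfl; exact Nat.not_odd_iff_even.mpr even_two hodd)
    (minpoly_adjoin_eq_cyclotomic (isPrimitiveRoot_exp p hp.ne_zero) hζs
      ((Nat.Prime.coprime_iff_not_dvd hp).mpr hps)) (α : ZMod p) (by omega)
    (hz.ne_zero hs.ne') h
  obtain ⟨c, hc, hc0, hc', hzc⟩ := hpartner 0 (by omega)
  obtain ⟨d, hd, -, hd', hzd⟩ := hpartner 1 (by omega)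
  have hcd : c = d + 1 := by
    have : ((c - 1 : ℕ) : ZMod p) = d := by
      rw [Nat.cast_sub (by omega), hc', hd']
      push_cast
      ring
    have := ZMod.natCast_injOn_range p (mem_range.2 (by omega)) (mem_range.2 (by omega)) this
    omega
  have hz1 : z = -1 := eq_neg_one_of_pow_succ_eq_neg_one (d := d)
    (by rw [← hcd]; linear_combination hzc) (by linear_combination hzd)
  rw [hz1] at hz
  exact hz.unique (IsPrimitiveRoot.neg_one 0 two_ne_zero.symm)
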